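/- Second-order consistency of the discrete energy characteristic: let u : ℝ × ℝ → ℝ be smooth, let λ ∈ ℝ, and fix (x,t) ∈ ℝ × ℝ. For Δx > 0 and Δt > 0, let u_{i,j} = u(x + i·Δx, t + j·Δt) and define φ̂ = (1/3)·[(u_{0,0}² + u_{0,1}²)/2]·[(u_{0,0} + u_{0,1})/2] + (1/2)·Σ_{j∈{0,1}} (u_{1,j} − 2u_{0,j} + u_{−1,j})/Δx² + λ·Δx²·[ (u_{1,1} − u_{−1,1}) − (u_{1,0} − u_{−1,0}) ]/(2·Δx·Δt). Then there exist constants C > 0 and δ > 0 such that for all 0 < Δx < δ and 0 < Δt < δ, | φ̂ − ( u(x, t + Δt/2)³/3 + u_xx(x, t + Δt/2) ) | ≤ C·(Δx² + Δt²); i.e. φ̂ is a second-order accurate approximation of the continuous characteristic Q₃ = u³/3 + u_xx at the point (x, t + Δt/2). -/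

import Mathlib

set_option maxHeartbeats 4000000
set_option maxRecDepth 8000
set_option linter.unusedTactic false
set_option linter.unreachableTactic false

open Set Finset
open scoped ContDiff

noncomputable section

/-- Partial derivative of `u(x,t)` with respect to `x`. -/
def ux (u : ℝ × ℝ → ℝ) (x t : ℝ) : ℝ := deriv (fun y => u (y, t)) x

/-- Second partial derivative of `u(x,t)` with respect to `x`. -/
def uxx (u : ℝ × ℝ → ℝ) (x t : ℝ) : ℝ := deriv (fun y => ux u y t) x

/-- Exact grid sample `u_{i,j} = u(x + i·Δx, t + j·Δt)`. -/
def sample (u : ℝ × ℝ → ℝ) (x t dx dt : ℝ) (i j : ℤ) : ℝ :=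
  u (x + (i : ℝ) * dx, t + (j : ℝ) * dt)

/-- The discrete characteristic `φ̂` of the EC(λ) scheme evaluated on exact samples
of `u`, based at the grid point `(x,t)`. -/
def phiHat (u : ℝ × ℝ → ℝ) (lam x t dx dt : ℝ) : ℝ :=
  (1 / 3) * ((sample u x t dx dt 0 0 ^ 2 + sample u x t dx dt 0 1 ^ 2) / 2)
      * ((sample u x t dx dt 0 0 + sample u x t dx dt 0 1) / 2)
  + (1 / 2) * ((sample u x t dx dt 1 0 - 2 * sample u x t dx dt 0 0
                  + sample u x t dx dt (-1) 0) / dx ^ 2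
             + (sample u x t dx dt 1 1 - 2 * sample u x t dx dt 0 1
                  + sample u x t dx dt (-1) 1) / dx ^ 2)
  + lam * dx ^ 2 * ((sample u x t dx dt 1 1 - sample u x t dx dt (-1) 1)
                  - (sample u x t dx dt 1 0 - sample u x t dx dt (-1) 0))
      / (2 * dx * dt)



lemma taylor_bound : ∀ (n : ℕ) (f : ℝ → ℝ), ContDiff ℝ ∞ f → ∀ (c h r M : ℝ), |h| ≤ r →
    (∀ s ∈ Set.Icc (c - r) (c + r), |iteratedDeriv (n + 1) f s| ≤ M) →
    |f (c + h) - ∑ k ∈ Finset.range (n + 1), h ^ k / (k.factorial : ℝ) * iteratedDeriv k f c|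
      ≤ M * |h| ^ (n + 1) := by
  intro n
  induction n with
  | zero =>
    intro f hf c h r M hr hM
    simp only [zero_add, Finset.sum_range_one, pow_zero, Nat.factorial_zero, Nat.cast_one, iteratedDeriv_zero,
      pow_one]
    have hS : Set.Icc (c - |h|) (c + |h|) ⊆ Set.Icc (c - r) (c + r) :=
      Set.Icc_subset_Icc (by linarith) (by linarith)
    have := Convex.norm_image_sub_le_of_norm_hasDerivWithin_le
      (f := f) (f' := deriv f) (s := Set.Icc (c - |h|) (c + |h|)) (C := M) (x := c) (y := c + h)
      (fun y hy => ((hf.differentiable (by simp) y).hasDerivAt).hasDerivWithinAt)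
      (fun y hy => by
        have := hM y (hS hy)
        simpa [iteratedDeriv_one, Real.norm_eq_abs] using this)
      (convex_Icc _ _)
      (Set.mem_Icc.mpr ⟨by linarith [abs_nonneg h], by linarith [abs_nonneg h]⟩)
      (Set.mem_Icc.mpr ⟨by linarith [neg_abs_le h], by linarith [le_abs_self h]⟩)
    simpa [Real.norm_eq_abs, div_one] using this
  | succ n IH =>
    intro f hf c h r M hr hM
    have hf' : ContDiff ℝ ∞ (deriv f) := (contDiff_infty_iff_deriv.mp hf).2
    have hdf : Differentiable ℝ f := hf.differentiable (by simp)
    have hM0 : 0 ≤ M := le_trans (abs_nonneg _)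
      (hM c ⟨by linarith [le_trans (abs_nonneg h) hr, abs_nonneg h],
             by linarith [le_trans (abs_nonneg h) hr, abs_nonneg h]⟩)
    set g : ℝ → ℝ := fun s => f s -
      ∑ k ∈ Finset.range (n + 2), (s - c) ^ k / (k.factorial : ℝ) * iteratedDeriv k f c with hg
    have hder : ∀ s, HasDerivAt g (deriv f s -
        ∑ k ∈ Finset.range (n + 1), (s - c) ^ k / (k.factorial : ℝ)
          * iteratedDeriv k (deriv f) c) s := by
      intro s
      have h1 : HasDerivAt (fun s : ℝ => ∑ k ∈ Finset.range (n + 2),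
            (s - c) ^ k / (k.factorial : ℝ) * iteratedDeriv k f c)
          (∑ k ∈ Finset.range (n + 2),
            ((k : ℝ) * (s - c) ^ (k - 1) * 1 / (k.factorial : ℝ)) * iteratedDeriv k f c) s := by
        apply HasDerivAt.fun_sum
        intro k _
        exact ((((hasDerivAt_id s).sub_const c).pow k).div_const _).mul_const _
      have h2 : (∑ k ∈ Finset.range (n + 2),
            ((k : ℝ) * (s - c) ^ (k - 1) * 1 / (k.factorial : ℝ)) * iteratedDeriv k f c)
          = ∑ k ∈ Finset.range (n + 1),
            (s - c) ^ k / (k.factorial : ℝ) * iteratedDeriv k (deriv f) c := by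
        rw [Finset.sum_range_succ']
        have hz : ((0 : ℕ) : ℝ) * (s - c) ^ (0 - 1) * 1 / ((Nat.factorial 0 : ℕ) : ℝ)
            * iteratedDeriv 0 f c = 0 := by simp
        rw [hz, add_zero]
        refine Finset.sum_congr rfl fun k _ => ?_
        rw [← iteratedDeriv_succ']
        have hfac : (((k + 1).factorial : ℕ) : ℝ) = ((k : ℝ) + 1) * (k.factorial : ℝ) := by
          push_cast [Nat.factorial_succ]; ring
        have hne : ((k : ℝ) + 1) ≠ 0 := by positivity
        have hfne : ((k.factorial : ℕ) : ℝ) ≠ 0 := Nat.cast_ne_zero.mpr k.factorial_ne_zero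
        simp only [Nat.add_sub_cancel, mul_one]
        rw [hfac]
        field_simp
        push_cast
        ring
      have h3 := ((hdf s).hasDerivAt).sub h1
      rw [← h2]
      exact h3
    have hgc : g c = 0 := by
      have hsum : ∑ k ∈ Finset.range (n + 2), (c - c) ^ k / (k.factorial : ℝ)
          * iteratedDeriv k f c = iteratedDeriv 0 f c := by
        rw [Finset.sum_range_succ']
        simp
      simp only [hg]
      rw [hsum, iteratedDeriv_zero, sub_self]
    have hbound : ∀ s ∈ Set.Icc (c - |h|) (c + |h|), ‖deriv f s -
        ∑ k ∈ Finset.range (n + 1), (s - c) ^ k / (k.factorial : ℝ)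
          * iteratedDeriv k (deriv f) c‖ ≤ M * |h| ^ (n + 1) := by
      intro s hs
      have hsc : |s - c| ≤ |h| := abs_le.mpr ⟨by linarith [hs.1], by linarith [hs.2]⟩
      have hIH := IH (deriv f) hf' c (s - c) r M (le_trans hsc hr)
        (fun y hy => by rw [← iteratedDeriv_succ']; exact hM y hy)
      have hcs : c + (s - c) = s := by ring
      rw [hcs] at hIH
      rw [Real.norm_eq_abs]
      exact le_trans hIH
        (mul_le_mul_of_nonneg_left (pow_le_pow_left₀ (abs_nonneg _) hsc _) hM0)
    have key := Convex.norm_image_sub_le_of_norm_hasDerivWithin_le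
      (s := Set.Icc (c - |h|) (c + |h|)) (x := c) (y := c + h)
      (fun s _ => (hder s).hasDerivWithinAt) hbound (convex_Icc _ _)
      (Set.mem_Icc.mpr ⟨by linarith [abs_nonneg h], by linarith [abs_nonneg h]⟩)
      (Set.mem_Icc.mpr ⟨by linarith [neg_abs_le h], by linarith [le_abs_self h]⟩)
    rw [hgc, sub_zero] at key
    have hgch : g (c + h) = f (c + h) -
        ∑ k ∈ Finset.range (n + 2), h ^ k / (k.factorial : ℝ) * iteratedDeriv k f c := by
      simp [hg, add_sub_cancel_left]
    rw [hgch, Real.norm_eq_abs] at key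
    have : ‖c + h - c‖ = |h| := by rw [Real.norm_eq_abs]; congr 1; ring
    rw [this] at key
    calc |f (c + h) - ∑ k ∈ Finset.range (n + 1 + 1), h ^ k / (k.factorial : ℝ)
          * iteratedDeriv k f c| ≤ M * |h| ^ (n + 1) * |h| := key
      _ = M * |h| ^ (n + 1 + 1) := by rw [mul_assoc, ← pow_succ]

lemma taylor0 {f : ℝ → ℝ} (hf : ContDiff ℝ ∞ f) {c h r M : ℝ} (hr : |h| ≤ r)
    (hM : ∀ s ∈ Set.Icc (c - r) (c + r), |deriv f s| ≤ M) :
    |f (c + h) - f c| ≤ M * |h| := by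
  simpa using taylor_bound 0 f hf c h r M hr
    (fun s hs => by rw [iteratedDeriv_one]; exact hM s hs)

lemma taylor1 {f : ℝ → ℝ} (hf : ContDiff ℝ ∞ f) {c h r M : ℝ} (hr : |h| ≤ r)
    (hM : ∀ s ∈ Set.Icc (c - r) (c + r), |iteratedDeriv 2 f s| ≤ M) :
    |f (c + h) - f c - h * deriv f c| ≤ M * h ^ 2 := by
  have h1 := taylor_bound 1 f hf c h r M hr hM
  have hsum : ∑ k ∈ Finset.range 2, h ^ k / (k.factorial : ℝ) * iteratedDeriv k f c
      = f c + h * deriv f c := by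
    simp [Finset.sum_range_succ, iteratedDeriv_one]
  have habs : |h| ^ 2 = h ^ 2 := sq_abs h
  rw [show (1:ℕ) + 1 = 2 from rfl, hsum, habs] at h1
  rw [sub_sub]
  exact h1

lemma taylor_diff2 {f : ℝ → ℝ} (hf : ContDiff ℝ ∞ f) {c h r M : ℝ} (hr : |h| ≤ r)
    (hM : ∀ s ∈ Set.Icc (c - r) (c + r), |iteratedDeriv 4 f s| ≤ M) :
    |f (c + h) - 2 * f c + f (c - h) - h ^ 2 * deriv (deriv f) c| ≤ 2 * M * h ^ 4 := by
  have h1 := taylor_bound 3 f hf c h r M hr hM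
  have h2 := taylor_bound 3 f hf c (-h) r M (by rwa [abs_neg]) hM
  rw [show (3:ℕ) + 1 = 4 from rfl] at h1 h2
  have hd2 : iteratedDeriv 2 f c = deriv (deriv f) c := by
    rw [iteratedDeriv_succ, iteratedDeriv_one]
  have habs : |h| ^ 4 = h ^ 4 := by rw [← abs_pow, abs_of_nonneg (by positivity)]
  have habs' : |(-h)| ^ 4 = h ^ 4 := by rw [abs_neg, habs]
  rw [habs] at h1; rw [habs'] at h2
  have e1 : ∑ k ∈ Finset.range 4, h ^ k / (k.factorial : ℝ) * iteratedDeriv k f c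
      = f c + h * iteratedDeriv 1 f c + h ^ 2 / 2 * iteratedDeriv 2 f c
        + h ^ 3 / 6 * iteratedDeriv 3 f c := by
    norm_num [Finset.sum_range_succ, Nat.factorial]
  have e2 : ∑ k ∈ Finset.range 4, (-h) ^ k / (k.factorial : ℝ) * iteratedDeriv k f c
      = f c - h * iteratedDeriv 1 f c + h ^ 2 / 2 * iteratedDeriv 2 f c
        - h ^ 3 / 6 * iteratedDeriv 3 f c := by
    norm_num [Finset.sum_range_succ, Nat.factorial]
    ring
  rw [e1] at h1; rw [e2] at h2
  have hsplit : f (c + h) - 2 * f c + f (c - h) - h ^ 2 * deriv (deriv f) c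
      = (f (c + h) - (f c + h * iteratedDeriv 1 f c + h ^ 2 / 2 * iteratedDeriv 2 f c
          + h ^ 3 / 6 * iteratedDeriv 3 f c))
        + (f (c + -h) - (f c - h * iteratedDeriv 1 f c + h ^ 2 / 2 * iteratedDeriv 2 f c
          - h ^ 3 / 6 * iteratedDeriv 3 f c)) := by
    rw [← hd2, show c + -h = c - h by ring]
    ring
  rw [hsplit]
  calc |_ + _| ≤ _ + _ := abs_add_le _ _
    _ ≤ M * h ^ 4 + M * h ^ 4 := add_le_add h1 h2
    _ = 2 * M * h ^ 4 := by ring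

/-- x-partial as a bivariate function. -/
def pdx (v : ℝ × ℝ → ℝ) (p : ℝ × ℝ) : ℝ := fderiv ℝ v p (1, 0)

/-- t-partial as a bivariate function. -/
def pdt (v : ℝ × ℝ → ℝ) (p : ℝ × ℝ) : ℝ := fderiv ℝ v p (0, 1)

lemma contDiff_pdx {v : ℝ × ℝ → ℝ} (hv : ContDiff ℝ ∞ v) : ContDiff ℝ ∞ (pdx v) :=
  (hv.fderiv_right (le_of_eq (by rfl))).clm_apply contDiff_const

lemma contDiff_pdt {v : ℝ × ℝ → ℝ} (hv : ContDiff ℝ ∞ v) : ContDiff ℝ ∞ (pdt v) :=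
  (hv.fderiv_right (le_of_eq (by rfl))).clm_apply contDiff_const

lemma hasDerivAt_slice_x {v : ℝ × ℝ → ℝ} (hv : ContDiff ℝ ∞ v) (y t : ℝ) :
    HasDerivAt (fun y' => v (y', t)) (pdx v (y, t)) y :=
  ((hv.differentiable (by simp)) (y, t)).hasFDerivAt.comp_hasDerivAt y
    ((hasDerivAt_id y).prodMk (hasDerivAt_const y t))

lemma hasDerivAt_slice_t {v : ℝ × ℝ → ℝ} (hv : ContDiff ℝ ∞ v) (x s : ℝ) :
    HasDerivAt (fun s' => v (x, s')) (pdt v (x, s)) s :=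
  ((hv.differentiable (by simp)) (x, s)).hasFDerivAt.comp_hasDerivAt s
    ((hasDerivAt_const s x).prodMk (hasDerivAt_id s))

lemma deriv_slice_x {v : ℝ × ℝ → ℝ} (hv : ContDiff ℝ ∞ v) (y t : ℝ) :
    deriv (fun y' => v (y', t)) y = pdx v (y, t) := (hasDerivAt_slice_x hv y t).deriv

lemma deriv_slice_t {v : ℝ × ℝ → ℝ} (hv : ContDiff ℝ ∞ v) (x s : ℝ) :
    deriv (fun s' => v (x, s')) s = pdt v (x, s) := (hasDerivAt_slice_t hv x s).deriv

/-- Iterated x-partials. -/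
def pdxN : ℕ → (ℝ × ℝ → ℝ) → (ℝ × ℝ → ℝ)
  | 0, v => v
  | (n + 1), v => pdxN n (pdx v)

/-- Iterated t-partials. -/
def pdtN : ℕ → (ℝ × ℝ → ℝ) → (ℝ × ℝ → ℝ)
  | 0, v => v
  | (n + 1), v => pdtN n (pdt v)

lemma contDiff_pdxN : ∀ (n : ℕ) (v : ℝ × ℝ → ℝ), ContDiff ℝ ∞ v → ContDiff ℝ ∞ (pdxN n v)
  | 0, _, hv => hv
  | (n + 1), _, hv => contDiff_pdxN n _ (contDiff_pdx hv)

lemma contDiff_pdtN : ∀ (n : ℕ) (v : ℝ × ℝ → ℝ), ContDiff ℝ ∞ v → ContDiff ℝ ∞ (pdtN n v)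
  | 0, _, hv => hv
  | (n + 1), _, hv => contDiff_pdtN n _ (contDiff_pdt hv)

lemma iteratedDeriv_slice_x : ∀ (n : ℕ) (v : ℝ × ℝ → ℝ), ContDiff ℝ ∞ v → ∀ (t y : ℝ),
    iteratedDeriv n (fun y' => v (y', t)) y = pdxN n v (y, t)
  | 0, v, _, t, y => by simp [pdxN]
  | (n + 1), v, hv, t, y => by
    rw [iteratedDeriv_succ',
      show deriv (fun y' => v (y', t)) = fun y' => pdx v (y', t) from
        funext fun y' => deriv_slice_x hv y' t]
    exact iteratedDeriv_slice_x n (pdx v) (contDiff_pdx hv) t y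

lemma iteratedDeriv_slice_t : ∀ (n : ℕ) (v : ℝ × ℝ → ℝ), ContDiff ℝ ∞ v → ∀ (x s : ℝ),
    iteratedDeriv n (fun s' => v (x, s')) s = pdtN n v (x, s)
  | 0, v, _, x, s => by simp [pdtN]
  | (n + 1), v, hv, x, s => by
    rw [iteratedDeriv_succ',
      show deriv (fun s' => v (x, s')) = fun s' => pdt v (x, s') from
        funext fun s' => deriv_slice_t hv x s']
    exact iteratedDeriv_slice_t n (pdt v) (contDiff_pdt hv) x s

lemma contDiff_slice_x {v : ℝ × ℝ → ℝ} (hv : ContDiff ℝ ∞ v) (t : ℝ) :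
    ContDiff ℝ ∞ (fun y : ℝ => v (y, t)) := hv.comp (contDiff_id.prodMk contDiff_const)

lemma contDiff_slice_t {v : ℝ × ℝ → ℝ} (hv : ContDiff ℝ ∞ v) (x : ℝ) :
    ContDiff ℝ ∞ (fun s : ℝ => v (x, s)) := hv.comp (contDiff_const.prodMk contDiff_id)

lemma pdxN_two (v : ℝ × ℝ → ℝ) : pdxN 2 v = pdx (pdx v) := rfl

/-- Second-order consistency of the discrete energy characteristic: for smooth `u`,
`φ̂` approximates the continuous characteristic `Q₃ = u³/3 + u_xx` at the point
`(x, t + Δt/2)` with error `O(Δx² + Δt²)`. -/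
theorem phiHat_second_order_consistency (u : ℝ × ℝ → ℝ) (hu : ContDiff ℝ (⊤ : ℕ∞) u)
    (lam x t : ℝ) :
    ∃ C > 0, ∃ δ > 0, ∀ dx dt : ℝ, 0 < dx → dx < δ → 0 < dt → dt < δ →
      |phiHat u lam x t dx dt
          - ((u (x, t + dt / 2)) ^ 3 / 3 + uxx u x (t + dt / 2))|
        ≤ C * (dx ^ 2 + dt ^ 2) := by
  have huS : ContDiff ℝ ∞ u := hu.of_le (by simp)
  -- uxx in terms of pdxN
  have uxx_eq : ∀ y s : ℝ, uxx u y s = pdxN 2 u (y, s) := by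
    intro y s
    have h1 : (fun y' => ux u y' s) = fun y' => pdx u (y', s) := by
      funext y'
      simp only [ux]
      exact deriv_slice_x huS y' s
    simp only [uxx, h1]
    rw [deriv_slice_x (contDiff_pdx huS) y s, pdxN_two]
  -- compact box and bounds
  set K : Set (ℝ × ℝ) := Set.Icc (x - 1) (x + 1) ×ˢ Set.Icc (t - 1) (t + 2) with hK_def
  have hK : IsCompact K := isCompact_Icc.prod isCompact_Icc
  have hmemK : ∀ y s : ℝ, x - 1 ≤ y → y ≤ x + 1 → t - 1 ≤ s → s ≤ t + 2 → (y, s) ∈ K := by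
    intro y s h1 h2 h3 h4
    exact Set.mem_prod.mpr ⟨Set.mem_Icc.mpr ⟨h1, h2⟩, Set.mem_Icc.mpr ⟨h3, h4⟩⟩
  have hxt : (x, t) ∈ K := hmemK x t (by linarith) (by linarith) (by linarith) (by linarith)
  have getB : ∀ w : ℝ × ℝ → ℝ, ContDiff ℝ ∞ w → ∃ M : ℝ, 0 ≤ M ∧ ∀ p ∈ K, |w p| ≤ M := by
    intro w hw
    obtain ⟨M, hM⟩ := hK.exists_bound_of_continuousOn hw.continuous.continuousOn
    exact ⟨M, le_trans (norm_nonneg _) (hM (x, t) hxt), fun p hp => hM p hp⟩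
  obtain ⟨K0, hK0n, hK0⟩ := getB u huS
  obtain ⟨K1, hK1n, hK1⟩ := getB (pdt u) (contDiff_pdt huS)
  obtain ⟨M1, hM1n, hM1⟩ := getB (pdtN 2 u) (contDiff_pdtN 2 u huS)
  obtain ⟨M2, hM2n, hM2⟩ := getB (pdxN 4 u) (contDiff_pdxN 4 u huS)
  obtain ⟨M3, hM3n, hM3⟩ := getB (pdtN 2 (pdxN 2 u)) (contDiff_pdtN 2 _ (contDiff_pdxN 2 u huS))
  obtain ⟨M4, hM4n, hM4⟩ := getB (pdt (pdx u)) (contDiff_pdt (contDiff_pdx huS))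
  set CA : ℝ := (6 * K0 ^ 2 * (M1 / 2) + 2 * K0 * (M1 / 2) ^ 2
      + 2 * ((K1 / 2 + M1 / 4) * 1) ^ 2 * (2 * K0 + M1 / 2)) / 12 with hCA_def
  have hCAn : 0 ≤ CA := by
    have h1 : 0 ≤ 6 * K0 ^ 2 * (M1 / 2) := by positivity
    have h2 : 0 ≤ 2 * K0 * (M1 / 2) ^ 2 := by positivity
    have h3 : 0 ≤ 2 * ((K1 / 2 + M1 / 4) * 1) ^ 2 * (2 * K0 + M1 / 2) := by positivity
    rw [hCA_def]; positivity
  refine ⟨CA + 2 * M2 + M3 / 4 + |lam| * M4 + 1, by positivity, 1, one_pos, ?_⟩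
  intro dx dt hdx hdx1 hdt hdt1
  set m : ℝ := t + dt / 2 with hm_def
  -- rewrite samples
  have e00 : sample u x t dx dt 0 0 = u (x, t) := by simp [sample]
  have e01 : sample u x t dx dt 0 1 = u (x, t + dt) := by simp [sample]
  have e10 : sample u x t dx dt 1 0 = u (x + dx, t) := by simp [sample]
  have e11 : sample u x t dx dt 1 1 = u (x + dx, t + dt) := by simp [sample]
  have em0 : sample u x t dx dt (-1) 0 = u (x - dx, t) := by
    simp [sample, ← sub_eq_add_neg]
  have em1 : sample u x t dx dt (-1) 1 = u (x - dx, t + dt) := by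
    simp [sample, ← sub_eq_add_neg]
  set a := u (x, t) with ha_def
  set b := u (x, t + dt) with hb_def
  set p := u (x + dx, t) with hp_def
  set q := u (x - dx, t) with hq_def
  set p' := u (x + dx, t + dt) with hp'_def
  set q' := u (x - dx, t + dt) with hq'_def
  set m₀ := u (x, m) with hm0_def
  set w := uxx u x m with hw_def
  have hphi : phiHat u lam x t dx dt
      = (1 / 3) * ((a ^ 2 + b ^ 2) / 2) * ((a + b) / 2)
        + (1 / 2) * ((p - 2 * a + q) / dx ^ 2 + (p' - 2 * b + q') / dx ^ 2)
        + lam * dx ^ 2 * ((p' - q') - (p - q)) / (2 * dx * dt) := by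
    rw [phiHat, e00, e01, e10, e11, em0, em1]
  -- ===== Part A : cubic term =====
  have hfc : ContDiff ℝ ∞ (fun s : ℝ => u (x, s)) := contDiff_slice_t huS x
  have hMt : ∀ s ∈ Set.Icc (m - 1/2) (m + 1/2),
      |iteratedDeriv 2 (fun s' : ℝ => u (x, s')) s| ≤ M1 := by
    intro s hs
    rw [iteratedDeriv_slice_t 2 u huS x s]
    exact hM1 (x, s) (hmemK x s (by linarith) (by linarith)
      (by rw [hm_def] at hs; obtain ⟨h1, h2⟩ := hs; linarith)
      (by rw [hm_def] at hs; obtain ⟨h1, h2⟩ := hs; linarith))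
  set d := pdt u (x, m) with hd_def
  have hderiv_fm : deriv (fun s' : ℝ => u (x, s')) m = d := deriv_slice_t huS x m
  have habs_dt2 : |dt / 2| ≤ 1 / 2 := by rw [abs_of_pos (by linarith)]; linarith
  have hb2 := taylor1 hfc (c := m) (h := dt / 2) (r := 1/2) habs_dt2 hMt
  have ha2 := taylor1 hfc (c := m) (h := -(dt / 2)) (r := 1/2)
    (by rw [abs_neg]; exact habs_dt2) hMt
  rw [hderiv_fm, show m + dt / 2 = t + dt by rw [hm_def]; ring] at hb2
  rw [hderiv_fm, show m + -(dt / 2) = t by rw [hm_def]; ring,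
    show (-(dt / 2)) ^ 2 = (dt / 2) ^ 2 by ring] at ha2
  beta_reduce at ha2
  beta_reduce at hb2
  rw [← ha_def, ← hm0_def] at ha2
  rw [← hb_def, ← hm0_def] at hb2
  -- ha2 : |a - m₀ - -(dt/2) * d| ≤ M1 * (dt/2)^2 ; hb2 : |b - m₀ - dt/2 * d| ≤ M1 * (dt/2)^2
  have hRa : |a - m₀ + dt / 2 * d| ≤ M1 * dt ^ 2 / 4 := by
    have : a - m₀ - -(dt / 2) * d = a - m₀ + dt / 2 * d := by ring
    rw [this] at ha2
    calc |a - m₀ + dt / 2 * d| ≤ M1 * (dt / 2) ^ 2 := ha2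
      _ = M1 * dt ^ 2 / 4 := by ring
  have hRb : |b - m₀ - dt / 2 * d| ≤ M1 * dt ^ 2 / 4 := by
    calc |b - m₀ - dt / 2 * d| ≤ M1 * (dt / 2) ^ 2 := hb2
      _ = M1 * dt ^ 2 / 4 := by ring
  have hdt2 : dt ^ 2 ≤ dt := by
    have h := mul_le_mul_of_nonneg_left hdt1.le hdt.le
    rw [mul_one] at h
    calc dt ^ 2 = dt * dt := by ring
      _ ≤ dt := h
  have hm0b : |m₀| ≤ K0 := hK0 (x, m) (hmemK x m (by linarith) (by linarith)
    (by rw [hm_def]; linarith) (by rw [hm_def]; linarith))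
  have hdb : |d| ≤ K1 := by
    rw [hd_def]
    exact hK1 (x, m) (hmemK x m (by linarith) (by linarith)
      (by rw [hm_def]; linarith) (by rw [hm_def]; linarith))
  have hsig : |a + b - 2 * m₀| ≤ M1 / 2 * dt ^ 2 := by
    have h := abs_add_le (a - m₀ + dt / 2 * d) (b - m₀ - dt / 2 * d)
    rw [show (a - m₀ + dt / 2 * d) + (b - m₀ - dt / 2 * d) = a + b - 2 * m₀ by ring] at h
    calc |a + b - 2 * m₀| ≤ |a - m₀ + dt / 2 * d| + |b - m₀ - dt / 2 * d| := h
      _ ≤ M1 * dt ^ 2 / 4 + M1 * dt ^ 2 / 4 := add_le_add hRa hRb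
      _ = M1 / 2 * dt ^ 2 := by ring
  have hsig2 : |a + b - 2 * m₀| ≤ M1 / 2 * dt := by
    refine le_trans hsig ?_
    have := mul_le_mul_of_nonneg_left hdt2 (by linarith : (0:ℝ) ≤ M1 / 2)
    linarith
  have hsig3 : |a + b - 2 * m₀| ≤ M1 / 2 := by
    refine le_trans hsig2 ?_
    have : M1 / 2 * dt ≤ M1 / 2 * 1 := mul_le_mul_of_nonneg_left (by linarith)
      (by linarith : (0:ℝ) ≤ M1 / 2)
    linarith
  have halpha : |a - m₀| ≤ (K1 / 2 + M1 / 4) * 1 * dt := by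
    have h := abs_add_le (a - m₀ + dt / 2 * d) (-(dt / 2 * d))
    rw [show (a - m₀ + dt / 2 * d) + -(dt / 2 * d) = a - m₀ by ring, abs_neg, abs_mul,
      abs_of_pos (by linarith : (0:ℝ) < dt / 2)] at h
    have h2 : M1 * dt ^ 2 / 4 ≤ M1 * dt / 4 := by
      have := mul_le_mul_of_nonneg_left hdt2 (by linarith : (0:ℝ) ≤ M1 / 4)
      linarith
    calc |a - m₀| ≤ |a - m₀ + dt / 2 * d| + dt / 2 * |d| := h
      _ ≤ M1 * dt ^ 2 / 4 + dt / 2 * K1 := add_le_add hRa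
          (mul_le_mul_of_nonneg_left hdb (by linarith))
      _ ≤ (K1 / 2 + M1 / 4) * 1 * dt := by linarith
  have hbeta : |b - m₀| ≤ (K1 / 2 + M1 / 4) * 1 * dt := by
    have h := abs_add_le (b - m₀ - dt / 2 * d) (dt / 2 * d)
    rw [show (b - m₀ - dt / 2 * d) + dt / 2 * d = b - m₀ by ring, abs_mul,
      abs_of_pos (by linarith : (0:ℝ) < dt / 2)] at h
    calc |b - m₀| ≤ |b - m₀ - dt / 2 * d| + dt / 2 * |d| := h
      _ ≤ M1 * dt ^ 2 / 4 + dt / 2 * K1 := add_le_add hRb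
          (mul_le_mul_of_nonneg_left hdb (by linarith))
      _ ≤ (K1 / 2 + M1 / 4) * 1 * dt := by
        have h2 : M1 * dt ^ 2 / 4 ≤ M1 * dt / 4 := by
          have := mul_le_mul_of_nonneg_left hdt2 (by linarith : (0:ℝ) ≤ M1 / 4)
          linarith
        linarith
  have hAbound : |(1 / 3) * ((a ^ 2 + b ^ 2) / 2) * ((a + b) / 2) - m₀ ^ 3 / 3|
      ≤ CA * dt ^ 2 := by
    have hid : (1 / 3) * ((a ^ 2 + b ^ 2) / 2) * ((a + b) / 2) - m₀ ^ 3 / 3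
        = (6 * m₀ ^ 2 * (a + b - 2 * m₀) + 2 * m₀ * (a + b - 2 * m₀) ^ 2
          + ((a - m₀) ^ 2 + (b - m₀) ^ 2) * (2 * m₀ + (a + b - 2 * m₀))) / 12 := by
      ring
    rw [hid, abs_div, show |(12:ℝ)| = 12 by norm_num]
    rw [div_le_iff₀ (by norm_num : (0:ℝ) < 12)]
    have htri : |6 * m₀ ^ 2 * (a + b - 2 * m₀) + 2 * m₀ * (a + b - 2 * m₀) ^ 2
          + ((a - m₀) ^ 2 + (b - m₀) ^ 2) * (2 * m₀ + (a + b - 2 * m₀))|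
        ≤ 6 * |m₀| ^ 2 * |a + b - 2 * m₀| + 2 * |m₀| * |a + b - 2 * m₀| ^ 2
          + ((a - m₀) ^ 2 + (b - m₀) ^ 2) * (2 * |m₀| + |a + b - 2 * m₀|) := by
      have t1 : |6 * m₀ ^ 2 * (a + b - 2 * m₀)| = 6 * |m₀| ^ 2 * |a + b - 2 * m₀| := by
        rw [abs_mul, abs_mul, abs_pow]; norm_num
      have t2 : |2 * m₀ * (a + b - 2 * m₀) ^ 2| = 2 * |m₀| * |a + b - 2 * m₀| ^ 2 := by
        rw [abs_mul, abs_mul, abs_pow]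
        norm_num
      have t3 : |((a - m₀) ^ 2 + (b - m₀) ^ 2) * (2 * m₀ + (a + b - 2 * m₀))|
          ≤ ((a - m₀) ^ 2 + (b - m₀) ^ 2) * (2 * |m₀| + |a + b - 2 * m₀|) := by
        rw [abs_mul, abs_of_nonneg (by positivity : (0:ℝ) ≤ (a - m₀) ^ 2 + (b - m₀) ^ 2)]
        refine mul_le_mul_of_nonneg_left ?_ (by positivity)
        calc |2 * m₀ + (a + b - 2 * m₀)| ≤ |2 * m₀| + |a + b - 2 * m₀| := abs_add_le _ _
          _ = 2 * |m₀| + |a + b - 2 * m₀| := by rw [abs_mul]; norm_num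
      calc |_ + _ + _| ≤ |6 * m₀ ^ 2 * (a + b - 2 * m₀)| + |2 * m₀ * (a + b - 2 * m₀) ^ 2|
            + |((a - m₀) ^ 2 + (b - m₀) ^ 2) * (2 * m₀ + (a + b - 2 * m₀))| :=
          abs_add_three _ _ _
        _ ≤ _ := by rw [t1, t2]; linarith
    refine le_trans htri ?_
    have hsq1 : (a - m₀) ^ 2 ≤ ((K1 / 2 + M1 / 4) * 1 * dt) ^ 2 := by
      rw [← sq_abs (a - m₀)]
      exact pow_le_pow_left₀ (abs_nonneg _) halpha 2
    have hsq2 : (b - m₀) ^ 2 ≤ ((K1 / 2 + M1 / 4) * 1 * dt) ^ 2 := by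
      rw [← sq_abs (b - m₀)]
      exact pow_le_pow_left₀ (abs_nonneg _) hbeta 2
    have hsq3 : |a + b - 2 * m₀| ^ 2 ≤ (M1 / 2 * dt) ^ 2 :=
      pow_le_pow_left₀ (abs_nonneg _) hsig2 2
    have hstep : 6 * |m₀| ^ 2 * |a + b - 2 * m₀| + 2 * |m₀| * |a + b - 2 * m₀| ^ 2
          + ((a - m₀) ^ 2 + (b - m₀) ^ 2) * (2 * |m₀| + |a + b - 2 * m₀|)
        ≤ 6 * K0 ^ 2 * (M1 / 2 * dt ^ 2) + 2 * K0 * (M1 / 2 * dt) ^ 2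
          + (((K1 / 2 + M1 / 4) * 1 * dt) ^ 2 + ((K1 / 2 + M1 / 4) * 1 * dt) ^ 2)
            * (2 * K0 + M1 / 2) := by
      gcongr <;> first
        | exact hm0b
        | exact hsig
        | exact hsig3
        | exact hsq3
        | exact hsq1
        | exact hsq2
        | exact abs_nonneg _
        | positivity
    refine le_trans hstep (le_of_eq ?_)
    rw [hCA_def]
    ring
  -- ===== Part B : second differences =====
  have habs_dx : |dx| ≤ 1 := by rw [abs_of_pos hdx]; linarith
  have hMx : ∀ s₀ : ℝ, t - 1 ≤ s₀ → s₀ ≤ t + 2 → ∀ y ∈ Set.Icc (x - 1) (x + 1),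
      |iteratedDeriv 4 (fun y' : ℝ => u (y', s₀)) y| ≤ M2 := by
    intro s₀ hs1 hs2 y hy
    rw [iteratedDeriv_slice_x 4 u huS s₀ y]
    exact hM2 (y, s₀) (hmemK y s₀ hy.1 hy.2 hs1 hs2)
  have hdd : ∀ s₀ : ℝ, deriv (deriv (fun y' : ℝ => u (y', s₀))) x = uxx u x s₀ := by
    intro s₀
    have h1 : deriv (fun y' : ℝ => u (y', s₀)) = fun y' => ux u y' s₀ := by
      funext y'
      rw [deriv_slice_x huS y' s₀]
      simp only [ux]
      exact (deriv_slice_x huS y' s₀).symm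
    rw [h1]
    rfl
  have hD0 := taylor_diff2 (contDiff_slice_x huS t) (c := x) (h := dx) (r := 1) habs_dx
    (hMx t (by linarith) (by linarith))
  have hD1 := taylor_diff2 (contDiff_slice_x huS (t + dt)) (c := x) (h := dx) (r := 1) habs_dx
    (hMx (t + dt) (by linarith) (by linarith))
  rw [hdd t] at hD0
  rw [hdd (t + dt)] at hD1
  have hB0 : |(p - 2 * a + q) / dx ^ 2 - uxx u x t| ≤ 2 * M2 * dx ^ 2 := by
    rw [show (p - 2 * a + q) / dx ^ 2 - uxx u x t
        = (p - 2 * a + q - dx ^ 2 * uxx u x t) / dx ^ 2 by field_simp]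
    rw [abs_div, abs_of_pos (by positivity : (0:ℝ) < dx ^ 2),
      div_le_iff₀ (by positivity : (0:ℝ) < dx ^ 2)]
    calc |p - 2 * a + q - dx ^ 2 * uxx u x t| ≤ 2 * M2 * dx ^ 4 := hD0
      _ = 2 * M2 * dx ^ 2 * dx ^ 2 := by ring
  have hB1 : |(p' - 2 * b + q') / dx ^ 2 - uxx u x (t + dt)| ≤ 2 * M2 * dx ^ 2 := by
    rw [show (p' - 2 * b + q') / dx ^ 2 - uxx u x (t + dt)
        = (p' - 2 * b + q' - dx ^ 2 * uxx u x (t + dt)) / dx ^ 2 by field_simp]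
    rw [abs_div, abs_of_pos (by positivity : (0:ℝ) < dx ^ 2),
      div_le_iff₀ (by positivity : (0:ℝ) < dx ^ 2)]
    calc |p' - 2 * b + q' - dx ^ 2 * uxx u x (t + dt)| ≤ 2 * M2 * dx ^ 4 := hD1
      _ = 2 * M2 * dx ^ 2 * dx ^ 2 := by ring
  -- time average of uxx
  have hcS : ContDiff ℝ ∞ (fun s : ℝ => pdxN 2 u (x, s)) :=
    contDiff_slice_t (contDiff_pdxN 2 u huS) x
  have hMt2 : ∀ s ∈ Set.Icc (m - 1/2) (m + 1/2),
      |iteratedDeriv 2 (fun s' : ℝ => pdxN 2 u (x, s')) s| ≤ M3 := by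
    intro s hs
    rw [iteratedDeriv_slice_t 2 (pdxN 2 u) (contDiff_pdxN 2 u huS) x s]
    exact hM3 (x, s) (hmemK x s (by linarith) (by linarith)
      (by rw [hm_def] at hs; obtain ⟨h1, h2⟩ := hs; linarith)
      (by rw [hm_def] at hs; obtain ⟨h1, h2⟩ := hs; linarith))
  have hT0 := taylor1 hcS (c := m) (h := dt / 2) (r := 1/2) habs_dt2 hMt2
  have hT1 := taylor1 hcS (c := m) (h := -(dt / 2)) (r := 1/2)
    (by rw [abs_neg]; exact habs_dt2) hMt2
  rw [show m + dt / 2 = t + dt by rw [hm_def]; ring] at hT0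
  rw [show m + -(dt / 2) = t by rw [hm_def]; ring,
    show (-(dt / 2)) ^ 2 = (dt / 2) ^ 2 by ring] at hT1
  rw [← uxx_eq x (t + dt), ← uxx_eq x m, ← hw_def] at hT0
  rw [← uxx_eq x t, ← uxx_eq x m, ← hw_def] at hT1
  have havg : |(1 / 2) * ((p - 2 * a + q) / dx ^ 2 + (p' - 2 * b + q') / dx ^ 2) - w|
      ≤ 2 * M2 * dx ^ 2 + M3 * dt ^ 2 / 4 := by
    set D2 := deriv (fun s' : ℝ => pdxN 2 u (x, s')) m with hD2_def
    have key : (1 / 2) * ((p - 2 * a + q) / dx ^ 2 + (p' - 2 * b + q') / dx ^ 2) - w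
        = (((p - 2 * a + q) / dx ^ 2 - uxx u x t)
            + ((p' - 2 * b + q') / dx ^ 2 - uxx u x (t + dt))) / 2
          + ((uxx u x t - w - -(dt / 2) * D2)
            + (uxx u x (t + dt) - w - dt / 2 * D2)) / 2 := by ring
    rw [key]
    have k1 : |(((p - 2 * a + q) / dx ^ 2 - uxx u x t)
          + ((p' - 2 * b + q') / dx ^ 2 - uxx u x (t + dt))) / 2| ≤ 2 * M2 * dx ^ 2 := by
      rw [abs_div, show |(2:ℝ)| = 2 by norm_num, div_le_iff₀ (by norm_num : (0:ℝ) < 2)]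
      calc |_ + _| ≤ |(p - 2 * a + q) / dx ^ 2 - uxx u x t|
            + |(p' - 2 * b + q') / dx ^ 2 - uxx u x (t + dt)| := abs_add_le _ _
        _ ≤ 2 * M2 * dx ^ 2 + 2 * M2 * dx ^ 2 := add_le_add hB0 hB1
        _ = 2 * M2 * dx ^ 2 * 2 := by ring
    have k2 : |((uxx u x t - w - -(dt / 2) * D2)
          + (uxx u x (t + dt) - w - dt / 2 * D2)) / 2| ≤ M3 * dt ^ 2 / 4 := by
      rw [abs_div, show |(2:ℝ)| = 2 by norm_num, div_le_iff₀ (by norm_num : (0:ℝ) < 2)]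
      calc |_ + _| ≤ |uxx u x t - w - -(dt / 2) * D2|
            + |uxx u x (t + dt) - w - dt / 2 * D2| := abs_add_le _ _
        _ ≤ M3 * (dt / 2) ^ 2 + M3 * (dt / 2) ^ 2 := add_le_add hT1 hT0
        _ = M3 * dt ^ 2 / 4 * 2 := by ring
    calc |_ + _| ≤ _ + _ := abs_add_le _ _
      _ ≤ 2 * M2 * dx ^ 2 + M3 * dt ^ 2 / 4 := add_le_add k1 k2
  -- ===== Part L : lambda term =====
  have hpsiC : ContDiff ℝ ∞ (fun y : ℝ => u (y, t + dt) - u (y, t)) :=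
    (contDiff_slice_x huS (t + dt)).sub (contDiff_slice_x huS t)
  have hpsider : ∀ y : ℝ, deriv (fun y' : ℝ => u (y', t + dt) - u (y', t)) y
      = pdx u (y, t + dt) - pdx u (y, t) := fun y =>
    ((hasDerivAt_slice_x huS y (t + dt)).sub (hasDerivAt_slice_x huS y t)).deriv
  have hbndpsi : ∀ y ∈ Set.Icc (x - dx) (x + dx),
      |deriv (fun y' : ℝ => u (y', t + dt) - u (y', t)) y| ≤ M4 * dt := by
    intro y hy
    rw [hpsider y]
    have h0 := taylor0 (contDiff_slice_t (contDiff_pdx huS) y) (c := t) (h := dt) (r := 1)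
      (by rw [abs_of_pos hdt]; linarith)
      (fun s hs => by
        rw [deriv_slice_t (contDiff_pdx huS) y s]
        exact hM4 (y, s) (hmemK y s (by linarith [hy.1]) (by linarith [hy.2])
          (by linarith [hs.1]) (by linarith [hs.2])))
    rw [abs_of_pos hdt] at h0
    exact h0
  have hpsi1 := taylor0 hpsiC (c := x) (h := dx) (r := dx) (le_of_eq (abs_of_pos hdx)) hbndpsi
  have hpsi2 := taylor0 hpsiC (c := x) (h := -dx) (r := dx)
    (by rw [abs_neg]; exact le_of_eq (abs_of_pos hdx)) hbndpsi
  rw [abs_of_pos hdx] at hpsi1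
  rw [abs_neg, abs_of_pos hdx, show x + -dx = x - dx by ring] at hpsi2
  rw [← hp'_def, ← hp_def, ← hb_def, ← ha_def] at hpsi1
  rw [← hq'_def, ← hq_def, ← hb_def, ← ha_def] at hpsi2
  have hDelta : |(p' - q') - (p - q)| ≤ 2 * (M4 * dt) * dx := by
    have hsplit2 : (p' - q') - (p - q)
        = (p' - p - (b - a)) - (q' - q - (b - a)) := by ring
    rw [hsplit2, sub_eq_add_neg]
    refine (abs_add_le _ _).trans ?_
    rw [abs_neg]
    linarith [hpsi1, hpsi2]
  have hL : |lam * dx ^ 2 * ((p' - q') - (p - q)) / (2 * dx * dt)| ≤ |lam| * M4 * dx ^ 2 := by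
    rw [abs_div, abs_mul, abs_mul, abs_of_pos (by positivity : (0:ℝ) < 2 * dx * dt),
      abs_of_pos (by positivity : (0:ℝ) < dx ^ 2),
      div_le_iff₀ (by positivity : (0:ℝ) < 2 * dx * dt)]
    calc |lam| * dx ^ 2 * |p' - q' - (p - q)| ≤ |lam| * dx ^ 2 * (2 * (M4 * dt) * dx) :=
        mul_le_mul_of_nonneg_left hDelta (by positivity)
      _ = |lam| * M4 * dx ^ 2 * (2 * dx * dt) := by ring
  -- ===== assembly =====
  rw [hphi]
  have hsplit3 : 1 / 3 * ((a ^ 2 + b ^ 2) / 2) * ((a + b) / 2)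
        + 1 / 2 * ((p - 2 * a + q) / dx ^ 2 + (p' - 2 * b + q') / dx ^ 2)
        + lam * dx ^ 2 * (p' - q' - (p - q)) / (2 * dx * dt) - (m₀ ^ 3 / 3 + w)
      = (1 / 3 * ((a ^ 2 + b ^ 2) / 2) * ((a + b) / 2) - m₀ ^ 3 / 3)
        + (1 / 2 * ((p - 2 * a + q) / dx ^ 2 + (p' - 2 * b + q') / dx ^ 2) - w)
        + lam * dx ^ 2 * (p' - q' - (p - q)) / (2 * dx * dt) := by ring
  rw [hsplit3]
  calc |_ + _ + _| ≤ |1 / 3 * ((a ^ 2 + b ^ 2) / 2) * ((a + b) / 2) - m₀ ^ 3 / 3|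
        + |1 / 2 * ((p - 2 * a + q) / dx ^ 2 + (p' - 2 * b + q') / dx ^ 2) - w|
        + |lam * dx ^ 2 * (p' - q' - (p - q)) / (2 * dx * dt)| := abs_add_three _ _ _
    _ ≤ CA * dt ^ 2 + (2 * M2 * dx ^ 2 + M3 * dt ^ 2 / 4) + |lam| * M4 * dx ^ 2 :=
        add_le_add (add_le_add hAbound havg) hL
    _ ≤ (CA + 2 * M2 + M3 / 4 + |lam| * M4 + 1) * (dx ^ 2 + dt ^ 2) := by
        rw [show (CA + 2 * M2 + M3 / 4 + |lam| * M4 + 1) * (dx ^ 2 + dt ^ 2)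
            = (CA * dt ^ 2 + (2 * M2 * dx ^ 2 + M3 * dt ^ 2 / 4) + |lam| * M4 * dx ^ 2)
              + (CA * dx ^ 2 + 2 * M2 * dt ^ 2 + M3 / 4 * dx ^ 2 + |lam| * M4 * dt ^ 2
                + dx ^ 2 + dt ^ 2) by ring]
        refine le_add_of_nonneg_right ?_
        have l1 : 0 ≤ CA * dx ^ 2 := mul_nonneg hCAn (sq_nonneg dx)
        have l2 : 0 ≤ 2 * M2 * dt ^ 2 := mul_nonneg (by linarith) (sq_nonneg dt)
        have l3 : 0 ≤ M3 / 4 * dx ^ 2 := mul_nonneg (by linarith) (sq_nonneg dx)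
        have l4 : 0 ≤ |lam| * M4 * dt ^ 2 :=
          mul_nonneg (mul_nonneg (abs_nonneg _) hM4n) (sq_nonneg dt)
        have l5 := sq_nonneg dx
        have l6 := sq_nonneg dt
        linarith
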